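/- arXiv:2412.00211 — 2 statements merged into one kernel-verified Lean document; each statement's English description precedes it below -/
import Mathlib

section
/- Let n ∈ ℕ, A ∈ ℝ^{n×n}, B ∈ ℝⁿ, c ∈ ℝⁿ, D ∈ ℝ, and let α > 0. Suppose there exists a symmetric positive-definite X ∈ ℝ^{n×n} such that the symmetric (n+2)×(n+2) block matrix with row/column blocks of sizes (n,1,1) and entries: (1,1) = AᵀXA − X, (1,2) = AᵀXB, (1,3) = c, (2,2) = BᵀXB − α², (2,3) = D, (3,3) = −1, is negative definite. Then for every input u : ℕ → ℝ and the trajectory with x(0) = 0, x(t+1) = A x(t) + B u(t), y(t) = cᵀ x(t) + D u(t), one has Σ_{t=0}^{t_f} y(t)² ≤ α² Σ_{t=0}^{t_f} u(t)² for every t_f ∈ ℕ; that is, the system has ℓ₂ gain at most α. -/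
/-!
`V x = x ⬝ᵥ X *ᵥ x` is a storage function for the system: the quadratic form of the negated LMI
matrix at `(x t, u t, y t)` is the dissipation inequality `V (x (t+1)) - V (x t) ≤ α² u t² - y t²`,
and summing it from `V (x 0) = 0`, with `V ≥ 0`, gives the gain bound.
-/

open Matrix

theorem sum_sq_le_of_storage {σ : Type*} (V : σ → ℝ) (x : ℕ → σ) (u y : ℕ → ℝ) (γ : ℝ)
    (hV₀ : V (x 0) = 0) (hV : ∀ t, 0 ≤ V (x t))
    (hdiss : ∀ t, V (x (t + 1)) - V (x t) ≤ γ * u t ^ 2 - y t ^ 2) (tf : ℕ) :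
    ∑ t ∈ Finset.range (tf + 1), y t ^ 2 ≤ γ * ∑ t ∈ Finset.range (tf + 1), u t ^ 2 := by
  have htel := Finset.sum_range_sub (fun t => V (x t)) (tf + 1)
  have hsum := Finset.sum_le_sum fun t (_ : t ∈ Finset.range (tf + 1)) => hdiss t
  rw [htel, Finset.sum_sub_distrib, ← Finset.mul_sum] at hsum
  linarith [hV (tf + 1)]

section Bordered

variable {ι R : Type*} [Fintype ι] [CommRing R]

theorem const_dotProduct_const_fin_one (p q : R) :
    (fun _ : Fin 1 => p) ⬝ᵥ (fun _ => q) = p * q := by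
  simp [dotProduct]

def borderedMatrix (P : Matrix ι ι R) (b : ι → R) (a : R) : Matrix (ι ⊕ Fin 1) (ι ⊕ Fin 1) R :=
  fromBlocks P (of fun i _ => b i) (of fun _ j => b j) (of fun _ _ => a)

theorem sumElim_dotProduct_borderedMatrix_mulVec (P : Matrix ι ι R) (b : ι → R) (a : R)
    (v : ι → R) (s : R) :
    Sum.elim v (fun _ => s) ⬝ᵥ borderedMatrix P b a *ᵥ Sum.elim v (fun _ => s) =
      v ⬝ᵥ P *ᵥ v + 2 * s * (v ⬝ᵥ b) + a * s ^ 2 := by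
  have hcol : (of fun i (_ : Fin 1) => b i) *ᵥ (fun _ => s) = s • b := by
    ext; simp [mulVec, dotProduct, mul_comm]
  have hrow : (of fun (_ : Fin 1) j => b j) *ᵥ v = fun _ => b ⬝ᵥ v := rfl
  have hcorner : (of fun (_ _ : Fin 1) => a) *ᵥ (fun _ => s) = fun _ => a * s := by
    ext; simp [mulVec, dotProduct]
  simp only [borderedMatrix, fromBlocks_mulVec, sumElim_dotProduct_sumElim, dotProduct_add,
    Sum.elim_comp_inl, Sum.elim_comp_inr, hcol, hrow, hcorner, dotProduct_smul, smul_eq_mul]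
  rw [dotProduct_comm b v, const_dotProduct_const_fin_one, const_dotProduct_const_fin_one]
  ring

end Bordered

section KYP

variable {ι : Type*} [Fintype ι]

def kypMatrix (A : Matrix ι ι ℝ) (B c : ι → ℝ) (D α : ℝ) (X : Matrix ι ι ℝ) :
    Matrix ((ι ⊕ Fin 1) ⊕ Fin 1) ((ι ⊕ Fin 1) ⊕ Fin 1) ℝ :=
  borderedMatrix (borderedMatrix (Aᵀ * X * A - X) (Aᵀ *ᵥ X *ᵥ B) (B ⬝ᵥ X *ᵥ B - α ^ 2))
    (Sum.elim c fun _ => D) (-1)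

theorem dotProduct_mulVec_comm_of_isSymm {X : Matrix ι ι ℝ} (hX : X.IsSymm) (v w : ι → ℝ) :
    v ⬝ᵥ X *ᵥ w = w ⬝ᵥ X *ᵥ v := by
  rw [dotProduct_comm, dotProduct_mulVec, ← mulVec_transpose, hX.eq]

theorem storage_sub_le_of_kypMatrix {A X : Matrix ι ι ℝ} {B c : ι → ℝ} {D α : ℝ}
    (hX : X.IsSymm) (hM : (-kypMatrix A B c D α X).PosSemidef) (x : ι → ℝ) (u : ℝ) :
    (A *ᵥ x + u • B) ⬝ᵥ X *ᵥ (A *ᵥ x + u • B) - x ⬝ᵥ X *ᵥ x ≤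
      α ^ 2 * u ^ 2 - (c ⬝ᵥ x + D * u) ^ 2 := by
  -- Taking the last coordinate equal to the output turns `2 w y - w²` into `y²`.
  have hform := hM.dotProduct_mulVec_nonneg
    (Sum.elim (Sum.elim x fun _ => u) fun _ => c ⬝ᵥ x + D * u)
  rw [star_trivial, neg_mulVec, dotProduct_neg, kypMatrix,
    sumElim_dotProduct_borderedMatrix_mulVec, sumElim_dotProduct_borderedMatrix_mulVec,
    sumElim_dotProduct_sumElim] at hform
  have hAx : ∀ w, x ⬝ᵥ Aᵀ *ᵥ w = A *ᵥ x ⬝ᵥ w := fun w => by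
    rw [dotProduct_mulVec, vecMul_transpose]
  have hnext : (A *ᵥ x + u • B) ⬝ᵥ X *ᵥ (A *ᵥ x + u • B) =
      A *ᵥ x ⬝ᵥ X *ᵥ (A *ᵥ x) + 2 * u * (A *ᵥ x ⬝ᵥ X *ᵥ B) + u ^ 2 * (B ⬝ᵥ X *ᵥ B) := by
    simp only [mulVec_add, mulVec_smul, dotProduct_add, add_dotProduct, dotProduct_smul,
      smul_dotProduct, smul_eq_mul, dotProduct_mulVec_comm_of_isSymm hX B]
    ring
  simp only [sub_mulVec, dotProduct_sub, ← mulVec_mulVec, hAx] at hform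
  rw [const_dotProduct_const_fin_one, dotProduct_comm x c] at hform
  rw [hnext]
  linarith

end KYP

theorem stmt8_general (n : ℕ) (A : Matrix (Fin n) (Fin n) ℝ) (B c : Fin n → ℝ)
    (D α : ℝ)
    (hX : ∃ X : Matrix (Fin n) (Fin n) ℝ, X.PosDef ∧
      (-(Matrix.fromBlocks
        (Matrix.fromBlocks
          (Aᵀ * X * A - X)
          (Matrix.of fun i (_ : Fin 1) => Aᵀ.mulVec (X.mulVec B) i)
          (Matrix.of fun (_ : Fin 1) j => Aᵀ.mulVec (X.mulVec B) j)
          (Matrix.of fun (_ _ : Fin 1) => B ⬝ᵥ X.mulVec B - α ^ 2))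
        (Matrix.of fun (i : Fin n ⊕ Fin 1) (_ : Fin 1) =>
          Sum.elim (fun j => c j) (fun _ => D) i)
        (Matrix.of fun (_ : Fin 1) (j : Fin n ⊕ Fin 1) =>
          Sum.elim (fun j => c j) (fun _ => D) j)
        (Matrix.of fun (_ _ : Fin 1) => (-1 : ℝ)))).PosDef) :
    ∀ (u : ℕ → ℝ) (x : ℕ → Fin n → ℝ) (y : ℕ → ℝ),
      x 0 = 0 →
      (∀ t, x (t + 1) = A.mulVec (x t) + u t • B) →
      (∀ t, y t = c ⬝ᵥ x t + D * u t) →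
      ∀ tf : ℕ,
        ∑ t ∈ Finset.range (tf + 1), (y t) ^ 2 ≤
          α ^ 2 * ∑ t ∈ Finset.range (tf + 1), (u t) ^ 2 := by
  obtain ⟨X, hXpd, hM⟩ := hX
  have hKYP : (-kypMatrix A B c D α X).PosSemidef := hM.posSemidef
  have hXsymm : X.IsSymm := by
    simpa [IsSymm, conjTranspose_eq_transpose_of_trivial] using hXpd.isHermitian.eq
  intro u x y hx₀ hx hy
  refine sum_sq_le_of_storage (fun v => v ⬝ᵥ X *ᵥ v) x u y (α ^ 2) ?_ ?_ ?_
  · simp [hx₀]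
  · exact fun t => by simpa using hXpd.posSemidef.dotProduct_mulVec_nonneg (x t)
  · intro t
    rw [hx, hy]
    exact storage_sub_le_of_kypMatrix hXsymm hKYP (x t) (u t)

/-- Case C of Theorem 2: the KYP-type LMI (bounded-real lemma form with block
sizes (n,1,1)) certifies that the state-space system `(A, B, cᵀ, D)` has ℓ₂
gain at most `α`. -/
theorem stmt8 (n : ℕ) (A : Matrix (Fin n) (Fin n) ℝ) (B c : Fin n → ℝ)
    (D α : ℝ) (hα : 0 < α)
    (hX : ∃ X : Matrix (Fin n) (Fin n) ℝ, X.PosDef ∧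
      (-(Matrix.fromBlocks
        (Matrix.fromBlocks
          (Aᵀ * X * A - X)
          (Matrix.of fun i (_ : Fin 1) => Aᵀ.mulVec (X.mulVec B) i)
          (Matrix.of fun (_ : Fin 1) j => Aᵀ.mulVec (X.mulVec B) j)
          (Matrix.of fun (_ _ : Fin 1) => B ⬝ᵥ X.mulVec B - α ^ 2))
        (Matrix.of fun (i : Fin n ⊕ Fin 1) (_ : Fin 1) =>
          Sum.elim (fun j => c j) (fun _ => D) i)
        (Matrix.of fun (_ : Fin 1) (j : Fin n ⊕ Fin 1) =>
          Sum.elim (fun j => c j) (fun _ => D) j)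
        (Matrix.of fun (_ _ : Fin 1) => (-1 : ℝ)))).PosDef) :
    ∀ (u : ℕ → ℝ) (x : ℕ → Fin n → ℝ) (y : ℕ → ℝ),
      x 0 = 0 →
      (∀ t, x (t + 1) = A.mulVec (x t) + u t • B) →
      (∀ t, y t = c ⬝ᵥ x t + D * u t) →
      ∀ tf : ℕ,
        ∑ t ∈ Finset.range (tf + 1), (y t) ^ 2 ≤
          α ^ 2 * ∑ t ∈ Finset.range (tf + 1), (u t) ^ 2 :=
  stmt8_general n A B c D α hX
end

section
/- Let m ≥ 1, let M ≥ 2 be an integer, let h₀ > 0 and 0 < h ≤ 1, and let g : {0,…,m−1} → ℝ satisfy |g(t)| ≤ h₀ hᵗ for all t. Set ε = π h₀ · (Σ_{t=0}^{m−1} hᵗ) · (m−1)/(2M), let β ∈ ℝ, and define f_r(θ) = Σ_{t=0}^{m−1} g(t) cos(tθ). Suppose that f_r(m'π/M) > β + ε for every integer m' ∈ {0,…,M}. Then for every θ ∈ ℝ, Re(Σ_{t=0}^{m−1} g(t) e^{−iθt}) > β. -/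
/-!
The real part of the frequency response is the cosine polynomial
`F θ = ∑ g t cos (t θ)`, which is even and `2π`-periodic, so only `θ ∈ [0, π]` matters.
Since `cos` is 1-Lipschitz, `F` is Lipschitz with constant `∑ t |g t| ≤ h₀ (∑ hᵗ) (m - 1)`,
and every `θ ∈ [0, π]` lies within `π / (2M)` of a sample `m'π/M`; the margin `ε` absorbs
the resulting error.
-/

open Finset Real

noncomputable def cosSum (g : ℕ → ℝ) (m : ℕ) (x : ℝ) : ℝ :=
  ∑ t ∈ range m, g t * cos (t * x)

theorem re_sum_mul_exp_neg_I_mul (g : ℕ → ℝ) (m : ℕ) (θ : ℝ) :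
    (∑ t ∈ range m, (g t : ℂ) * Complex.exp (-(Complex.I * (θ * t)))).re = cosSum g m θ := by
  rw [Complex.re_sum]
  refine sum_congr rfl fun t _ => ?_
  have : -(Complex.I * ((θ : ℂ) * (t : ℂ))) = ((-(t * θ) : ℝ) : ℂ) * Complex.I := by
    push_cast; ring
  rw [this, Complex.re_ofReal_mul, Complex.exp_ofReal_mul_I_re, cos_neg]

theorem cosSum_abs (g : ℕ → ℝ) (m : ℕ) (x : ℝ) : cosSum g m |x| = cosSum g m x := by
  refine sum_congr rfl fun t _ => ?_
  rw [← cos_abs (t * x), abs_mul, Nat.abs_cast]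

theorem cosSum_add_int_mul_two_pi (g : ℕ → ℝ) (m : ℕ) (x : ℝ) (k : ℤ) :
    cosSum g m (x + k * (2 * π)) = cosSum g m x := by
  refine sum_congr rfl fun t _ => ?_
  have : (t : ℝ) * (x + k * (2 * π)) = t * x + ((t * k : ℤ) : ℝ) * (2 * π) := by
    push_cast; ring
  rw [this, cos_add_int_mul_two_pi]

theorem exists_mem_Icc_cosSum_eq (g : ℕ → ℝ) (m : ℕ) (θ : ℝ) :
    ∃ φ ∈ Set.Icc 0 π, cosSum g m θ = cosSum g m φ := by
  set θ' := toIocMod two_pi_pos (-π) θ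
  have hθ' : θ' ∈ Set.Ioc (-π) (-π + 2 * π) := toIocMod_mem_Ioc _ _ _
  refine ⟨|θ'|, ⟨abs_nonneg _, abs_le.2 ⟨hθ'.1.le, by linarith [hθ'.2]⟩⟩, ?_⟩
  have hθ : θ = θ' + toIocDiv two_pi_pos (-π) θ * (2 * π) := by
    rw [← self_sub_toIocMod_eq_mul]; ring
  rw [cosSum_abs, hθ, cosSum_add_int_mul_two_pi]

theorem abs_cosSum_sub_le (g : ℕ → ℝ) (m : ℕ) (a b : ℝ) :
    |cosSum g m a - cosSum g m b| ≤ (∑ t ∈ range m, |g t| * t) * |a - b| := by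
  rw [cosSum, cosSum, ← sum_sub_distrib, sum_mul]
  refine (abs_sum_le_sum_abs _ _).trans (sum_le_sum fun t _ => ?_)
  calc |g t * cos (t * a) - g t * cos (t * b)|
      = |g t| * |cos (t * a) - cos (t * b)| := by rw [← mul_sub, abs_mul]
    _ ≤ |g t| * |t * a - t * b| := mul_le_mul_of_nonneg_left (abs_cos_sub_cos_le _ _) (abs_nonneg _)
    _ = |g t| * t * |a - b| := by rw [← mul_sub, abs_mul, Nat.abs_cast, mul_assoc]

theorem sum_abs_mul_le {g c : ℕ → ℝ} {m : ℕ} (hg : ∀ t < m, |g t| ≤ c t) :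
    ∑ t ∈ range m, |g t| * t ≤ (∑ t ∈ range m, c t) * ((m : ℝ) - 1) := by
  rw [sum_mul]
  refine sum_le_sum fun t ht => ?_
  have htm : t < m := mem_range.1 ht
  have ht : (t : ℝ) ≤ m - 1 := by
    rw [le_sub_iff_add_le]; exact_mod_cast htm
  exact mul_le_mul (hg t htm) ht t.cast_nonneg ((abs_nonneg _).trans (hg t htm))

theorem exists_nat_le_abs_sub_le_half {x : ℝ} {M : ℕ} (hx : x ∈ Set.Icc 0 (M : ℝ)) :
    ∃ n ≤ M, |x - n| ≤ 1 / 2 := by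
  have h0 : 0 ≤ x + 1 / 2 := by linarith [hx.1]
  refine ⟨⌊x + 1 / 2⌋₊, ?_, abs_le.2 ⟨?_, ?_⟩⟩
  · exact Nat.le_of_lt_succ <| (Nat.floor_lt h0).2 <| by push_cast; linarith [hx.2]
  · linarith [Nat.floor_le h0]
  · linarith [Nat.lt_floor_add_one (x + 1 / 2)]

theorem exists_nat_le_abs_sub_mul_le {δ φ : ℝ} {M : ℕ} (hδ : 0 < δ)
    (hφ : φ ∈ Set.Icc 0 (M * δ)) : ∃ n ≤ M, |φ - n * δ| ≤ δ / 2 := by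
  have hx : φ / δ ∈ Set.Icc 0 (M : ℝ) :=
    ⟨div_nonneg hφ.1 hδ.le, (div_le_iff₀ hδ).2 hφ.2⟩
  obtain ⟨n, hnM, hn⟩ := exists_nat_le_abs_sub_le_half hx
  refine ⟨n, hnM, ?_⟩
  calc |φ - n * δ| = |(φ / δ - n) * δ| := by rw [sub_mul, div_mul_cancel₀ _ hδ.ne']
    _ = |φ / δ - n| * δ := by rw [abs_mul, abs_of_pos hδ]
    _ ≤ 1 / 2 * δ := by gcongr
    _ = δ / 2 := by ring

theorem stmt15_general (m M : ℕ) (hM : 2 ≤ M) (h₀ h : ℝ)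
    (g : ℕ → ℝ) (hg : ∀ t < m, |g t| ≤ h₀ * h ^ t)
    (β : ℝ)
    (hsamp : ∀ m' : ℕ, m' ≤ M →
      β + Real.pi * h₀ * (∑ t ∈ Finset.range m, h ^ t) * ((m : ℝ) - 1) / (2 * M) <
        ∑ t ∈ Finset.range m, g t * Real.cos (t * ((m' : ℝ) * Real.pi / M))) :
    ∀ θ : ℝ,
      β < (∑ t ∈ Finset.range m, (g t : ℂ) * Complex.exp (-(Complex.I * (θ * t)))).re := by
  intro θ
  have hMpos : (0 : ℝ) < M := by exact_mod_cast (by omega : 0 < M)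
  obtain ⟨φ, hφ, hθφ⟩ := exists_mem_Icc_cosSum_eq g m θ
  obtain ⟨n, hnM, hn⟩ := exists_nat_le_abs_sub_mul_le (div_pos pi_pos hMpos)
    (by rwa [mul_div_cancel₀ _ hMpos.ne'] : φ ∈ Set.Icc 0 (M * (π / M)))
  set s := (n : ℝ) * π / M
  set K := ∑ t ∈ range m, |g t| * t
  set L := h₀ * (∑ t ∈ range m, h ^ t) * ((m : ℝ) - 1)
  have hlip := abs_le.1 (abs_cosSum_sub_le g m φ s)
  have hKL : K ≤ L := by simpa only [K, L, mul_sum] using sum_abs_mul_le hg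
  have hdist : |φ - s| ≤ π / (2 * M) := by
    simpa only [s, mul_div_assoc, div_div, mul_comm (2 : ℝ)] using hn
  have herr : K * |φ - s| ≤ L * (π / (2 * M)) :=
    mul_le_mul hKL hdist (abs_nonneg _)
      ((sum_nonneg fun t _ => by positivity).trans hKL)
  have hsample : β + L * (π / (2 * M)) < cosSum g m s :=
    (hsamp n hnM).trans_eq' (by ring)
  rw [re_sum_mul_exp_neg_I_mul, hθφ]
  linarith [hlip.1]

/-- Theorem 3, Case B (frequency-domain content): sampled half-plane
constraints on `f_r`, tightened by `ε`, together with the decay constraint,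
force the entire Nyquist locus of the FIR filter into the half-plane
`Re z > β`. -/
theorem stmt15 (m M : ℕ) (hm : 1 ≤ m) (hM : 2 ≤ M) (h₀ h : ℝ)
    (hh₀ : 0 < h₀) (hh : 0 < h) (hh1 : h ≤ 1)
    (g : ℕ → ℝ) (hg : ∀ t < m, |g t| ≤ h₀ * h ^ t)
    (β : ℝ)
    (hsamp : ∀ m' : ℕ, m' ≤ M →
      β + Real.pi * h₀ * (∑ t ∈ Finset.range m, h ^ t) * ((m : ℝ) - 1) / (2 * M) <
        ∑ t ∈ Finset.range m, g t * Real.cos (t * ((m' : ℝ) * Real.pi / M))) :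
    ∀ θ : ℝ,
      β < (∑ t ∈ Finset.range m, (g t : ℂ) * Complex.exp (-(Complex.I * (θ * t)))).re :=
  stmt15_general m M hM h₀ h g hg β hsamp
end
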